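/- Let X ⪰ 0 be an n×n rank-k PSD matrix with k > r, and X* a rank-r PSD matrix. Then ‖X_r − X*‖_F ≤ 2√r·‖X − X*‖_F, where X_r is the best rank-r approximation of X. -/

import Mathlib

open Matrix

noncomputable def vnorm {m : Type*} [Fintype m] (v : m → ℝ) : ℝ :=
  Real.sqrt (∑ i, v i ^ 2)

noncomputable def frob {m n : Type*} [Fintype m] [Fintype n] (A : Matrix m n ℝ) : ℝ :=
  Real.sqrt (∑ i, ∑ j, A i j ^ 2)

/-- The spectral norm (largest singular value) of a real matrix. -/
noncomputable def specNorm {m n : Type*} [Fintype m] [Fintype n] (A : Matrix m n ℝ) : ℝ :=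
  sSup {c | ∃ x : n → ℝ, vnorm x = 1 ∧ c = vnorm (A.mulVec x)}

/-- The smallest singular value of a real matrix. -/
noncomputable def sigMin {m n : Type*} [Fintype m] [Fintype n] (A : Matrix m n ℝ) : ℝ :=
  sInf {c | ∃ x : n → ℝ, vnorm x = 1 ∧ c = vnorm (A.mulVec x)}

/-- `Dist U V`: the infimum of `‖U - V R‖_F` over orthogonal `R`. -/
noncomputable def FDist {n r : Type*} [Fintype n] [Fintype r] [DecidableEq r]
    (U V : Matrix n r ℝ) : ℝ :=
  sInf {c | ∃ R : Matrix r r ℝ, Rᵀ * R = 1 ∧ c = frob (U - V * R)}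

/-- The `i`-th largest singular value of a real matrix. -/
noncomputable def singVal {n m : ℕ} (A : Matrix (Fin n) (Fin m) ℝ) (i : Fin m) : ℝ :=
  Real.sqrt ((Matrix.isHermitian_conjTranspose_mul_self A).eigenvalues
    ((Tuple.sort (Matrix.isHermitian_conjTranspose_mul_self A).eigenvalues) i.rev))

/-! Since `X_r` is a best rank-`r` approximation of `X` and `X*` has rank `r`, we have
`‖X - X_r‖_F ≤ ‖X - X*‖_F`, and the triangle inequality already gives the constant `2`,
which is at most `2 √r` once `r ≥ 1`; for `r = 0` both `X_r` and `X*` vanish. -/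

theorem Matrix.rank_eq_zero_iff {m n K : Type*} [Fintype m] [Fintype n] [DecidableEq n] [Field K]
    {A : Matrix m n K} : A.rank = 0 ↔ A = 0 := by
  rw [Matrix.rank, Submodule.finrank_eq_zero, LinearMap.range_eq_bot, ← Matrix.toLin'_apply',
    LinearEquiv.map_eq_zero_iff]

section Frobenius

attribute [local instance] Matrix.frobeniusNormedAddCommGroup

variable {m n : Type*} [Fintype m] [Fintype n]

theorem frob_nonneg (A : Matrix m n ℝ) : 0 ≤ frob A := Real.sqrt_nonneg _

theorem frob_eq_frobenius_norm (A : Matrix m n ℝ) : frob A = ‖A‖ := by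
  simp [frob, Matrix.frobenius_norm_def, Real.sqrt_eq_rpow, Real.norm_eq_abs, sq_abs]

theorem frob_sub_le_two_mul_of_le {X Y Z : Matrix m n ℝ} (h : frob (X - Y) ≤ frob (X - Z)) :
    frob (Y - Z) ≤ 2 * frob (X - Z) := by
  simp only [frob_eq_frobenius_norm] at h ⊢
  calc ‖Y - Z‖ ≤ ‖Y - X‖ + ‖X - Z‖ := norm_sub_le_norm_sub_add_norm_sub ..
    _ ≤ 2 * ‖X - Z‖ := by rw [norm_sub_rev]; linarith

end Frobenius

theorem stmt15_general {n : ℕ} (r : ℕ)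
    (X Xstar Xr : Matrix (Fin n) (Fin n) ℝ)
    (hXsrank : Xstar.rank = r)
    (hXrrank : Xr.rank ≤ r)
    (hbest : ∀ Z : Matrix (Fin n) (Fin n) ℝ, Z.rank ≤ r →
      frob (X - Xr) ≤ frob (X - Z)) :
    frob (Xr - Xstar) ≤ 2 * Real.sqrt r * frob (X - Xstar) := by
  obtain rfl | hr := Nat.eq_zero_or_pos r
  · rw [rank_eq_zero_iff.1 hXsrank, rank_eq_zero_iff.1 (Nat.le_zero.1 hXrrank)]
    simp [frob]
  calc frob (Xr - Xstar) ≤ 2 * frob (X - Xstar) :=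
        frob_sub_le_two_mul_of_le (hbest Xstar hXsrank.le)
    _ ≤ 2 * Real.sqrt r * frob (X - Xstar) := by
        have hfrob := frob_nonneg (X - Xstar)
        have hsqrt : 1 ≤ Real.sqrt r := Real.one_le_sqrt.2 (by exact_mod_cast hr)
        nlinarith

/-- For PSD `X` of rank `k > r` and rank-`r` PSD `X*`, the best rank-`r`
approximation `X_r` of `X` (truncated eigendecomposition) satisfies
`‖X_r - X*‖_F ≤ 2 √r ‖X - X*‖_F`. -/
theorem stmt15 {n : ℕ} (r k : ℕ) (hrk : r < k)
    (X Xstar Xr : Matrix (Fin n) (Fin n) ℝ)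
    (hX : X.PosSemidef) (hXrank : X.rank = k)
    (hXs : Xstar.PosSemidef) (hXsrank : Xstar.rank = r)
    (hXr1 : Xr.PosSemidef) (hXr2 : (X - Xr).PosSemidef)
    (hXr3 : Xr * (X - Xr) = 0) (hXrrank : Xr.rank ≤ r)
    (hbest : ∀ Z : Matrix (Fin n) (Fin n) ℝ, Z.rank ≤ r →
      frob (X - Xr) ≤ frob (X - Z)) :
    frob (Xr - Xstar) ≤ 2 * Real.sqrt r * frob (X - Xstar) :=
  stmt15_general r X Xstar Xr hXsrank hXrrank hbest
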